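/- arXiv:1201.6092 — 2 statements merged into one kernel-verified Lean document; each statement's English description precedes it below -/
import Mathlib

section
/- For a Jordan block J of size s with eigenvalue θ on the diagonal where |θ| > 1, J is invertible and for all integers k < 0 the operator norm satisfies ‖J^k‖ ≤ s·|k|^{s-1}·|θ|^{k+s}. -/
/-!
Write `J = θ • (1 - y)` with `y = -θ⁻¹ • N`, where `N` is the nilpotent shift with ones on the
superdiagonal. Since `y ^ s = 0`, the negative binomial series truncates:
`(1 - y)⁻ᵐ = ∑_{j < s} multichoose m j • y ^ j`, so `J⁻ᵐ = θ⁻ᵐ • ∑_{j < s} multichoose m j • y ^ j`.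
Each power of the shift has operator norm at most `1` and `‖θ⁻¹‖ ≤ 1`, so `‖y ^ j‖ ≤ 1`; together
with `multichoose m j ≤ m ^ j` this gives `‖J⁻ᵐ‖ ≤ s * m ^ (s - 1) * ‖θ‖⁻ᵐ`, and for `m = -k`
the remaining slack is `‖θ‖⁻ᵐ ≤ ‖θ‖ ^ (k + s)`.
-/
open Finset
open scoped Matrix

theorem Fin.sum_ite_val_eq {M : Type*} [AddCommMonoid M] {s : ℕ} (n : ℕ) (f : Fin s → M) :
    ∑ l : Fin s, (if (l : ℕ) = n then f l else 0) = if h : n < s then f ⟨n, h⟩ else 0 := by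
  split_ifs with h
  · simpa [Fin.ext_iff] using Finset.sum_ite_eq' univ (⟨n, h⟩ : Fin s) f
  · exact sum_eq_zero fun l _ => if_neg (by omega)

theorem sum_range_comp_add_le {G : ℕ → ℝ} {s : ℕ} (hG : ∀ t, 0 ≤ G t)
    (hGs : ∀ t, s ≤ t → G t = 0) (p : ℕ) :
    ∑ i ∈ range s, G (i + p) ≤ ∑ i ∈ range s, G i :=
  calc ∑ i ∈ range s, G (i + p) = ∑ i ∈ Ico p (p + s), G i := by
        simp [sum_Ico_eq_sum_range, add_comm]
    _ ≤ ∑ i ∈ range (p + s), G i := by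
        rw [range_eq_Ico]
        exact sum_le_sum_of_subset_of_nonneg (Ico_subset_Ico_left (Nat.zero_le p)) fun t _ _ => hG t
    _ = ∑ i ∈ range s, G i :=
        (sum_subset (range_subset_range.2 (by omega)) fun t _ ht => hGs t (by simpa using ht)).symm

def shiftMatrix (R : Type*) [Zero R] [One R] (s p : ℕ) : Matrix (Fin s) (Fin s) R :=
  Matrix.of fun i j => if (j : ℕ) = i + p then 1 else 0

section shiftMatrix

variable {R : Type*} [Semiring R] {s : ℕ}

theorem shiftMatrix_zero : shiftMatrix R s 0 = 1 := by
  ext i j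
  simp [shiftMatrix, Matrix.one_apply, Fin.ext_iff, eq_comm]

theorem shiftMatrix_mul (p q : ℕ) :
    shiftMatrix R s p * shiftMatrix R s q = shiftMatrix R s (p + q) := by
  ext i j
  simp only [shiftMatrix, Matrix.mul_apply, Matrix.of_apply, ite_mul, one_mul, zero_mul,
    Fin.sum_ite_val_eq]
  split_ifs <;> first | rfl | omega

theorem shiftMatrix_one_pow (p : ℕ) : shiftMatrix R s 1 ^ p = shiftMatrix R s p := by
  induction p with
  | zero => rw [pow_zero, shiftMatrix_zero]
  | succ p ih => rw [pow_succ, ih, shiftMatrix_mul]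

theorem shiftMatrix_eq_zero {p : ℕ} (hp : s ≤ p) : shiftMatrix R s p = 0 := by
  ext i j
  simp only [shiftMatrix, Matrix.of_apply, Matrix.zero_apply, ite_eq_right_iff]
  omega

theorem shiftMatrix_mulVec (p : ℕ) (v : Fin s → R) (i : Fin s) :
    (shiftMatrix R s p *ᵥ v) i = if h : (i : ℕ) + p < s then v ⟨i + p, h⟩ else 0 := by
  simp only [shiftMatrix, Matrix.mulVec, dotProduct, Matrix.of_apply, ite_mul, one_mul, zero_mul,
    Fin.sum_ite_val_eq]

end shiftMatrix

open scoped Matrix.Norms.L2Operator in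
theorem norm_shiftMatrix_le_one {𝕜 : Type*} [RCLike 𝕜] (s p : ℕ) : ‖shiftMatrix 𝕜 s p‖ ≤ 1 := by
  rw [← Matrix.l2_opNorm_toEuclideanCLM]
  refine ContinuousLinearMap.opNorm_le_bound _ zero_le_one fun x => ?_
  rw [one_mul, ← sq_le_sq₀ (norm_nonneg _) (norm_nonneg _)]
  let G : ℕ → ℝ := fun t => if h : t < s then ‖x ⟨t, h⟩‖ ^ 2 else 0
  have hG : ∀ i : Fin s, ‖x i‖ ^ 2 = G i := fun i => by simp [G]
  calc _ = ∑ i ∈ range s, G (i + p) := by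
        rw [EuclideanSpace.norm_sq_eq, ← Fin.sum_univ_eq_sum_range (fun i => G (i + p))]
        refine sum_congr rfl fun i _ => ?_
        simp only [Matrix.ofLp_toEuclideanCLM, shiftMatrix_mulVec, G]
        split_ifs <;> simp
    _ ≤ ∑ i ∈ range s, G i :=
        sum_range_comp_add_le (fun t => by dsimp only [G]; split_ifs <;> positivity)
          (fun t ht => dif_neg (by omega)) p
    _ = ‖x‖ ^ 2 := by
        rw [EuclideanSpace.norm_sq_eq, ← Fin.sum_univ_eq_sum_range G]
        simp only [hG]

theorem Nat.multichoose_le_pow (m j : ℕ) : m.multichoose j ≤ m ^ j :=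
  calc m.multichoose j = Fintype.card (Sym (Fin m) j) := (Sym.card_sym_fin_eq_multichoose m j).symm
    _ ≤ Fintype.card (List.Vector (Fin m) j) :=
      Fintype.card_le_of_surjective Sym.ofVector fun x =>
        ⟨⟨x.1.toList, by simp⟩, Sym.ext (Multiset.coe_toList x.1)⟩
    _ = m ^ j := by simp

section multichoose

variable {R : Type*}

theorem one_sub_mul_sum_multichoose_succ_smul_pow [Ring R] (y : R) (m n : ℕ) :
    (1 - y) * ∑ j ∈ range (n + 1), (m + 1).multichoose j • y ^ j =
      ∑ j ∈ range (n + 1), m.multichoose j • y ^ j - (m + 1).multichoose n • y ^ (n + 1) := by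
  induction n with
  | zero => simp
  | succ n ih =>
    rw [sum_range_succ, mul_add, ih, sum_range_succ _ (n + 1), Nat.multichoose_succ_succ]
    simp only [add_smul, sub_mul, one_mul, mul_add, mul_smul_comm, ← pow_succ', smul_sub]
    abel

theorem one_sub_pow_mul_sum_multichoose_smul_pow [Ring R] {y : R} {n : ℕ} (hy : y ^ n = 0)
    (m : ℕ) : (1 - y) ^ m * ∑ j ∈ range n, m.multichoose j • y ^ j = 1 := by
  obtain _ | n := n
  · exact Subsingleton.elim (h := subsingleton_of_zero_eq_one (by simpa using hy.symm)) _ _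
  induction m with
  | zero => simp [sum_range_succ']
  | succ m ih =>
    rw [pow_succ, mul_assoc, one_sub_mul_sum_multichoose_succ_smul_pow, hy, smul_zero, sub_zero, ih]

theorem norm_sum_multichoose_smul_pow_le [SeminormedRing R] {y : R} {m s : ℕ} (hm : 1 ≤ m)
    (hy : ∀ j < s, ‖y ^ j‖ ≤ 1) :
    ‖∑ j ∈ range s, m.multichoose j • y ^ j‖ ≤ s * m ^ (s - 1) := by
  have hterm : ∀ j ∈ range s, ‖m.multichoose j • y ^ j‖ ≤ (m : ℝ) ^ (s - 1) := fun j hj => by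
    rw [mem_range] at hj
    calc ‖m.multichoose j • y ^ j‖ ≤ m.multichoose j * ‖y ^ j‖ := norm_nsmul_le ..
      _ ≤ (m : ℝ) ^ (s - 1) * 1 := by
          gcongr
          · exact_mod_cast (Nat.multichoose_le_pow m j).trans (Nat.pow_le_pow_right hm (by omega))
          · exact hy j hj
      _ = (m : ℝ) ^ (s - 1) := mul_one _
  calc _ ≤ ∑ j ∈ range s, ‖m.multichoose j • y ^ j‖ := norm_sum_le _ _
    _ ≤ ∑ j ∈ range s, (m : ℝ) ^ (s - 1) := sum_le_sum hterm
    _ = s * m ^ (s - 1) := by simp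

end multichoose

def jordanBlock (R : Type*) [Semiring R] (s : ℕ) (θ : R) : Matrix (Fin s) (Fin s) R :=
  θ • 1 + shiftMatrix R s 1

section jordanBlock

variable {K : Type*} [Field K] {s : ℕ} {θ : K}

theorem jordanBlock_pow_mul_sum_multichoose (hθ : θ ≠ 0) (n : ℕ) :
    jordanBlock K s θ ^ n *
      (θ⁻¹ ^ n • ∑ j ∈ range s, n.multichoose j • (-θ⁻¹ • shiftMatrix K s 1) ^ j) = 1 := by
  have hJ : jordanBlock K s θ = θ • (1 - -θ⁻¹ • shiftMatrix K s 1) := by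
    rw [jordanBlock, neg_smul, sub_neg_eq_add, smul_add, smul_smul, mul_inv_cancel₀ hθ, one_smul]
  have hnil : (-θ⁻¹ • shiftMatrix K s 1) ^ s = 0 := by
    rw [smul_pow, shiftMatrix_one_pow, shiftMatrix_eq_zero le_rfl, smul_zero]
  rw [hJ, smul_pow, smul_mul_smul_comm, ← mul_pow, mul_inv_cancel₀ hθ, one_pow, one_smul,
    one_sub_pow_mul_sum_multichoose_smul_pow hnil]

theorem isUnit_jordanBlock (hθ : θ ≠ 0) : IsUnit (jordanBlock K s θ) :=
  (Matrix.isUnit_iff_isUnit_det _).2 <| Matrix.isUnit_det_of_right_inverse <| by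
    simpa only [pow_one] using jordanBlock_pow_mul_sum_multichoose (s := s) hθ 1

theorem jordanBlock_inv_pow (hθ : θ ≠ 0) (n : ℕ) :
    (jordanBlock K s θ)⁻¹ ^ n =
      θ⁻¹ ^ n • ∑ j ∈ range s, n.multichoose j • (-θ⁻¹ • shiftMatrix K s 1) ^ j := by
  rw [Matrix.inv_pow', Matrix.inv_eq_right_inv (jordanBlock_pow_mul_sum_multichoose hθ n)]

end jordanBlock

theorem norm_toEuclideanCLM_jordanBlock_inv_pow_le {𝕜 : Type*} [RCLike 𝕜] {s n : ℕ} {θ : 𝕜}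
    (hθ : 1 ≤ ‖θ‖) (hn : 1 ≤ n) :
    ‖Matrix.toEuclideanCLM (𝕜 := 𝕜) ((jordanBlock 𝕜 s θ)⁻¹ ^ n)‖ ≤
      s * n ^ (s - 1) * ‖θ‖⁻¹ ^ n := by
  open scoped Matrix.Norms.L2Operator in
  have hθ0 : θ ≠ 0 := norm_pos_iff.mp (one_pos.trans_le hθ)
  have hθinv : ‖θ‖⁻¹ ≤ 1 := inv_le_one_of_one_le₀ hθ
  have hpow : ∀ j, ‖(-θ⁻¹ • shiftMatrix 𝕜 s 1) ^ j‖ ≤ 1 := fun j => by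
    rw [smul_pow, shiftMatrix_one_pow, norm_smul, norm_pow, norm_neg, norm_inv]
    exact mul_le_one₀ (pow_le_one₀ (by positivity) hθinv) (norm_nonneg _)
      (norm_shiftMatrix_le_one s j)
  rw [Matrix.l2_opNorm_toEuclideanCLM, jordanBlock_inv_pow hθ0, norm_smul, norm_pow, norm_inv,
    mul_comm]
  gcongr
  exact norm_sum_multichoose_smul_pow_le hn fun j _ => hpow j

theorem jordan_block_neg_pow_norm_bound_general (s : ℕ) (θ : ℂ)
    (hθ : 1 < ‖θ‖) (J : Matrix (Fin s) (Fin s) ℂ)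
    (hJ : ∀ i j : Fin s, J i j =
      if j = i then θ else if (j : ℕ) = (i : ℕ) + 1 then 1 else 0)
    (k : ℤ) (hk : k < 0) :
    IsUnit J ∧
      ‖Matrix.toEuclideanCLM (𝕜 := ℂ) (J⁻¹ ^ (-k).toNat)‖ ≤
        (s : ℝ) * |(k : ℝ)| ^ (s - 1) * ‖θ‖ ^ (k + s) := by
  obtain rfl : J = jordanBlock ℂ s θ := by
    ext i j
    rw [hJ, jordanBlock, shiftMatrix]
    simp only [Matrix.add_apply, Matrix.smul_apply, Matrix.one_apply, Matrix.of_apply, smul_eq_mul]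
    split_ifs <;> simp_all [Fin.ext_iff]
  refine ⟨isUnit_jordanBlock (norm_pos_iff.mp (one_pos.trans hθ)),
    (norm_toEuclideanCLM_jordanBlock_inv_pow_le hθ.le (by omega)).trans ?_⟩
  have hm : (((-k).toNat : ℕ) : ℝ) = |(k : ℝ)| := by
    rw [abs_of_neg (by exact_mod_cast hk)]
    exact_mod_cast Int.toNat_of_nonneg (by omega)
  have hpow : ‖θ‖⁻¹ ^ (-k).toNat ≤ ‖θ‖ ^ (k + s) := by
    rw [inv_pow, ← zpow_natCast, ← zpow_neg]
    exact zpow_le_zpow_right₀ hθ.le (by omega)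
  rw [hm]
  gcongr

/-- For a Jordan block `J` of size `s` with eigenvalue `θ`, `|θ| > 1`, `J` is invertible, and
for `k < 0` the operator norm satisfies `‖J^k‖ ≤ s·|k|^{s-1}·|θ|^{k+s}`. -/
theorem jordan_block_neg_pow_norm_bound (s : ℕ) (hs : 1 ≤ s) (θ : ℂ)
    (hθ : 1 < ‖θ‖) (J : Matrix (Fin s) (Fin s) ℂ)
    (hJ : ∀ i j : Fin s, J i j =
      if j = i then θ else if (j : ℕ) = (i : ℕ) + 1 then 1 else 0)
    (k : ℤ) (hk : k < 0) :
    IsUnit J ∧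
      ‖Matrix.toEuclideanCLM (𝕜 := ℂ) (J⁻¹ ^ (-k).toNat)‖ ≤
        (s : ℝ) * |(k : ℝ)| ^ (s - 1) * ‖θ‖ ^ (k + s) :=
  jordan_block_neg_pow_norm_bound_general s θ hθ J hJ k hk
end

section
/- Let F ⊂ ℝ^d be a finite union of closed unit lattice cubes (cubes of the form z + [0,1]^d, z ∈ ℤ^d), and let b₁ > 0. Then for all t ∈ (0, b₁], the Lebesgue measure of the t-neighborhood of ∂F satisfies ℒ^d(U(∂F, t)) ≤ 2·(1 + 2b₁)^{d−1}·t·ℋ^{d−1}(∂F). -/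
/-!
The frontier of `F` is the union of its boundary faces: the unit facets shared by a cube of `F`
and a lattice cube not in `F`. The closed `t`-neighbourhood of one face lies in a box of volume
`2t(1 + 2t)^{d-1}`, while distinct faces have disjoint relative interiors, each of
`ℋ^{d-1}`-measure at least `1`; so both sides are controlled by the number of boundary faces.
-/

open MeasureTheory Metric Set Filter Topology
open scoped ENNReal Finset

namespace LatticeCubes

lemma int_eq_of_mem_Ioo_of_mem_Icc {m n : ℤ} {s : ℝ} (hm : s ∈ Ioo (m : ℝ) (m + 1))
    (hn : s ∈ Icc (n : ℝ) (n + 1)) : m = n := by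
  have h₁ : m < n + 1 := by exact_mod_cast hm.1.trans_le hn.2
  have h₂ : n < m + 1 := by exact_mod_cast hn.1.trans_lt hm.2
  omega

lemma eq_add_one_of_mem_Icc_of_lt {m n : ℤ} {s : ℝ} (hm : s ∈ Icc (m : ℝ) (m + 1))
    (hn : s ∈ Icc (n : ℝ) (n + 1)) (hmn : m < n) : n = m + 1 ∧ s = n := by
  have h₁ : n ≤ m + 1 := by exact_mod_cast hn.1.trans hm.2
  have h₂ : n = m + 1 := by omega
  refine ⟨h₂, le_antisymm ?_ hn.1⟩
  rw [h₂]; push_cast; exact hm.2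

lemma eventually_mem_Icc_floor (r : ℝ) : ∀ᶠ s in 𝓝 r, r ∈ Icc (⌊s⌋ : ℝ) (⌊s⌋ + 1) := by
  have hlo : (⌈r⌉ - 1 : ℤ) < r := by push_cast; linarith [Int.ceil_lt_add_one r]
  have hhi : r < (⌊r⌋ + 1 : ℤ) := by push_cast; exact Int.lt_floor_add_one r
  filter_upwards [Ioo_mem_nhds hlo hhi] with s hs
  have h₁ : ⌊s⌋ < ⌊r⌋ + 1 := Int.floor_lt.mpr hs.2
  have h₂ : ⌈r⌉ - 1 ≤ ⌊s⌋ := Int.le_floor.mpr hs.1.le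
  constructor
  · exact (Int.cast_le.mpr (by omega : ⌊s⌋ ≤ ⌊r⌋)).trans (Int.floor_le r)
  · exact (Int.le_ceil r).trans (by exact_mod_cast (by omega : ⌈r⌉ ≤ ⌊s⌋ + 1))

variable {d : ℕ}

def cube (z : Fin d → ℤ) : Set (EuclideanSpace ℝ (Fin d)) :=
  {x | ∀ i, x i ∈ Icc (z i : ℝ) (z i + 1)}

def openCube (z : Fin d → ℤ) : Set (EuclideanSpace ℝ (Fin d)) :=
  {x | ∀ i, x i ∈ Ioo (z i : ℝ) (z i + 1)}

lemma closure_openCube (z : Fin d → ℤ) : closure (openCube z) = cube z := by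
  have hpi (I : Fin d → Set ℝ) : {x : EuclideanSpace ℝ (Fin d) | ∀ i, x i ∈ I i} =
      PiLp.homeomorph 2 (fun _ => ℝ) ⁻¹' univ.pi I := by
    ext; simp [PiLp.homeomorph]
  rw [cube, openCube, hpi, hpi, ← Homeomorph.preimage_closure, closure_pi_set]
  simp only [fun i => closure_Ioo (lt_add_one (z i : ℝ)).ne]

lemma isClosed_cube (z : Fin d → ℤ) : IsClosed (cube z) :=
  closure_openCube z ▸ isClosed_closure

lemma mem_cube_floor (x : EuclideanSpace ℝ (Fin d)) : x ∈ cube fun i => ⌊x i⌋ :=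
  fun _ => ⟨Int.floor_le _, (Int.lt_floor_add_one _).le⟩

lemma eq_of_mem_openCube_of_mem_cube {z w : Fin d → ℤ} {x : EuclideanSpace ℝ (Fin d)}
    (hz : x ∈ openCube z) (hw : x ∈ cube w) : z = w :=
  funext fun i => int_eq_of_mem_Ioo_of_mem_Icc (hz i) (hw i)

lemma mem_interior_biUnion_cube_iff (Z : Finset (Fin d → ℤ)) {x : EuclideanSpace ℝ (Fin d)} :
    x ∈ interior (⋃ z ∈ Z, cube z) ↔ ∀ z, x ∈ cube z → z ∈ Z := by
  constructor
  · intro hx z hxz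
    by_contra hz
    have hdisj : openCube z ⊆ (⋃ w ∈ Z, cube w)ᶜ := fun y hy hyF => by
      obtain ⟨w, hw, hyw⟩ := mem_iUnion₂.mp hyF
      exact hz (eq_of_mem_openCube_of_mem_cube hy hyw ▸ hw)
    have := closure_mono hdisj (closure_openCube z ▸ hxz)
    rw [closure_compl] at this
    exact this hx
  · intro h
    -- near `x`, the lattice cube with corner `⌊y⌋` contains both `y` and `x`
    have hfloor : ∀ᶠ y in 𝓝 x, x ∈ cube fun i => ⌊y i⌋ := eventually_all.mpr fun i =>
      (PiLp.continuous_apply 2 _ i).continuousAt.eventually (eventually_mem_Icc_floor (x i))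
    rw [mem_interior_iff_mem_nhds]
    filter_upwards [hfloor] with y hy
    exact mem_biUnion (h _ hy) (mem_cube_floor y)

lemma mem_frontier_biUnion_cube_iff (Z : Finset (Fin d → ℤ)) {x : EuclideanSpace ℝ (Fin d)} :
    x ∈ frontier (⋃ z ∈ Z, cube z) ↔ (∃ z ∈ Z, x ∈ cube z) ∧ ∃ z ∉ Z, x ∈ cube z := by
  rw [(isClosed_biUnion_finset fun z _ => isClosed_cube z).frontier_eq]
  simp only [Set.mem_sdiff, mem_iUnion₂, exists_prop, mem_interior_biUnion_cube_iff, not_forall]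
  exact Iff.rfl.and (exists_congr fun _ => and_comm)

-- `(w, i)` indexes the facet of `cube w` on the hyperplane `xᵢ = wᵢ`, shared with `cube (w - eᵢ)`.
def face (p : (Fin d → ℤ) × Fin d) : Set (EuclideanSpace ℝ (Fin d)) :=
  {x ∈ cube p.1 | x p.2 = p.1 p.2}

lemma isClosed_face (p : (Fin d → ℤ) × Fin d) : IsClosed (face p) :=
  (isClosed_cube p.1).inter (isClosed_eq (PiLp.continuous_apply 2 _ p.2) continuous_const)

def IsBoundaryFace (Z : Finset (Fin d → ℤ)) (p : (Fin d → ℤ) × Fin d) : Prop :=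
  Xor (p.1 ∈ Z) (p.1 - Pi.single p.2 1 ∈ Z)

open Classical in
noncomputable def boundaryFaces (Z : Finset (Fin d → ℤ)) : Finset ((Fin d → ℤ) × Fin d) :=
  {p ∈ Z ×ˢ Finset.univ ∪ (Z ×ˢ Finset.univ).image (fun q => (q.1 + Pi.single q.2 1, q.2)) |
    IsBoundaryFace Z p}

lemma mem_boundaryFaces {Z : Finset (Fin d → ℤ)} {p : (Fin d → ℤ) × Fin d} :
    p ∈ boundaryFaces Z ↔ IsBoundaryFace Z p := by
  classical
  refine ⟨fun h => (Finset.mem_filter.mp h).2, fun h => Finset.mem_filter.mpr ⟨?_, h⟩⟩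
  rcases h with ⟨h, -⟩ | ⟨h, -⟩
  · exact Finset.mem_union_left _ (Finset.mem_product.mpr ⟨h, Finset.mem_univ _⟩)
  · refine Finset.mem_union_right _ (Finset.mem_image.mpr ⟨(p.1 - Pi.single p.2 1, p.2), ?_, ?_⟩)
    · exact Finset.mem_product.mpr ⟨h, Finset.mem_univ _⟩
    · simp

lemma sub_single_eq_update {ι G : Type*} [DecidableEq ι] [AddGroup G] (w : ι → G) (i : ι)
    (a : G) : w - Pi.single i a = Function.update w i (w i - a) := by
  ext j
  rcases eq_or_ne j i with rfl | hj <;> simp [*]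

lemma face_subset_cube_sub_single (p : (Fin d → ℤ) × Fin d) :
    face p ⊆ cube (p.1 - Pi.single p.2 1) := by
  rintro x ⟨hx, hxi⟩ j
  rcases eq_or_ne j p.2 with rfl | hj
  · simp [hxi]
  · simpa [Pi.single_eq_of_ne hj] using hx j

lemma face_subset_frontier {Z : Finset (Fin d → ℤ)} {p : (Fin d → ℤ) × Fin d}
    (hp : IsBoundaryFace Z p) : face p ⊆ frontier (⋃ z ∈ Z, cube z) := by
  intro x hx
  rw [mem_frontier_biUnion_cube_iff]
  rcases hp with ⟨h₁, h₂⟩ | ⟨h₁, h₂⟩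
  · exact ⟨⟨_, h₁, hx.1⟩, _, h₂, face_subset_cube_sub_single p hx⟩
  · exact ⟨⟨_, h₁, face_subset_cube_sub_single p hx⟩, _, h₂, hx.1⟩

lemma exists_boundaryFace_of_mem_cube_update {Z : Finset (Fin d → ℤ)} {a : Fin d → ℤ}
    {i : Fin d} {m : ℤ} {x : EuclideanSpace ℝ (Fin d)} (ha : x ∈ cube a)
    (hm : x ∈ cube (Function.update a i m)) (haZ : a ∈ Z) (hmZ : Function.update a i m ∉ Z) :
    ∃ p, IsBoundaryFace Z p ∧ x ∈ face p := by
  have hne : a i ≠ m := fun h => hmZ (by rwa [← h, Function.update_eq_self])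
  have hxm : x i ∈ Icc (m : ℝ) (m + 1) := by simpa using hm i
  rcases hne.lt_or_gt with hlt | hgt
  · obtain ⟨rfl, hxi⟩ := eq_add_one_of_mem_Icc_of_lt (ha i) hxm hlt
    refine ⟨(Function.update a i (a i + 1), i), Or.inr ⟨?_, hmZ⟩, hm, by simpa using hxi⟩
    simpa [sub_single_eq_update] using haZ
  · obtain ⟨hm, hxi⟩ := eq_add_one_of_mem_Icc_of_lt hxm (ha i) hgt
    refine ⟨(a, i), Or.inl ⟨haZ, ?_⟩, ⟨ha, hxi⟩⟩
    simpa [sub_single_eq_update, hm] using hmZ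

lemma exists_boundaryFace_of_mem_cube {Z : Finset (Fin d → ℤ)} {a b : Fin d → ℤ}
    {x : EuclideanSpace ℝ (Fin d)} (ha : x ∈ cube a) (hb : x ∈ cube b) (haZ : a ∈ Z)
    (hbZ : b ∉ Z) : ∃ p, IsBoundaryFace Z p ∧ x ∈ face p := by
  classical
  -- turn the coordinates of `b` into those of `a` one at a time, through cubes containing `x`
  suffices h : ∀ s : Finset (Fin d), ∀ b, (∀ j ∉ s, b j = a j) → x ∈ cube b → b ∉ Z →
      ∃ p, IsBoundaryFace Z p ∧ x ∈ face p from h Finset.univ b (by simp) hb hbZ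
  intro s
  induction s using Finset.induction_on with
  | empty =>
    intro b hba _ hbZ
    exact (hbZ ((funext fun j => hba j (Finset.notMem_empty j)) ▸ haZ)).elim
  | insert i s _ ih =>
    intro b hba hb hbZ
    set c := Function.update b i (a i)
    have hc : x ∈ cube c := fun j => by
      rcases eq_or_ne j i with rfl | hj
      · simpa [c] using ha j
      · simpa [c, hj] using hb j
    by_cases hcZ : c ∈ Z
    · have hcb : Function.update c i (b i) = b := by simp [c]
      rw [← hcb] at hb hbZ
      exact exists_boundaryFace_of_mem_cube_update hc hb hcZ hbZ
    · refine ih c (fun j hj => ?_) hc hcZ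
      rcases eq_or_ne j i with rfl | hji
      · simp [c]
      · simpa [c, hji] using hba j (by simp [hj, hji])

lemma frontier_biUnion_cube (Z : Finset (Fin d → ℤ)) :
    frontier (⋃ z ∈ Z, cube z) = ⋃ p ∈ boundaryFaces Z, face p := by
  refine subset_antisymm (fun x hx => ?_) (iUnion₂_subset fun p hp =>
    face_subset_frontier (mem_boundaryFaces.mp hp))
  obtain ⟨⟨a, haZ, ha⟩, b, hbZ, hb⟩ := (mem_frontier_biUnion_cube_iff Z).mp hx
  obtain ⟨p, hp, hxp⟩ := exists_boundaryFace_of_mem_cube ha hb haZ hbZ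
  exact mem_biUnion (mem_boundaryFaces.mpr hp) hxp

def openFace (p : (Fin d → ℤ) × Fin d) : Set (EuclideanSpace ℝ (Fin d)) :=
  {x | x p.2 = p.1 p.2 ∧ ∀ j ≠ p.2, x j ∈ Ioo (p.1 j : ℝ) (p.1 j + 1)}

lemma openFace_subset_face (p : (Fin d → ℤ) × Fin d) : openFace p ⊆ face p := by
  rintro x ⟨hxi, hx⟩
  refine ⟨fun j => ?_, hxi⟩
  rcases eq_or_ne j p.2 with rfl | hj
  · rw [hxi]
    exact ⟨le_rfl, by linarith⟩
  · exact Ioo_subset_Icc_self (hx j hj)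

lemma measurableSet_openFace (p : (Fin d → ℤ) × Fin d) : MeasurableSet (openFace p) := by
  unfold openFace
  measurability

lemma pairwise_disjoint_openFace :
    Pairwise fun p q : (Fin d → ℤ) × Fin d => Disjoint (openFace p) (openFace q) := by
  rintro ⟨w, i⟩ ⟨v, j⟩ hne
  refine disjoint_left.mpr fun x ⟨hxi, hx⟩ ⟨hxj, hy⟩ => hne ?_
  rcases eq_or_ne i j with rfl | hij
  · refine Prod.ext (funext fun k => ?_) rfl
    rcases eq_or_ne k i with rfl | hk
    · have h : (w k : ℝ) = v k := hxi.symm.trans hxj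
      exact_mod_cast h
    · exact int_eq_of_mem_Ioo_of_mem_Icc (hx k hk) (Ioo_subset_Icc_self (hy k hk))
  · have hvw := int_eq_of_mem_Ioo_of_mem_Icc (hy i hij) ⟨hxi.ge, by rw [hxi]; linarith⟩
    exact absurd (hxi ▸ hvw ▸ hy i hij).1 (lt_irrefl _)

lemma one_le_hausdorffMeasure_openFace (p : (Fin d → ℤ) × Fin d) :
    1 ≤ μH[(d : ℝ) - 1] (openFace p) := by
  obtain ⟨w, i⟩ := p
  obtain ⟨n, rfl⟩ : ∃ n, d = n + 1 := ⟨d - 1, by have := i.pos; omega⟩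
  have hdim : ((n + 1 : ℕ) : ℝ) - 1 = n := by push_cast; ring
  rw [hdim]
  -- forgetting the `i`-th coordinate maps the open face onto an open unit box of `ℝⁿ`
  set proj : EuclideanSpace ℝ (Fin (n + 1)) → Fin n → ℝ := fun x k => x (i.succAbove k)
  have hproj : LipschitzWith 1 proj := LipschitzWith.of_dist_le_mul fun x y => by
    simpa using (dist_pi_le_iff dist_nonneg).mpr fun k => PiLp.dist_apply_le x y (i.succAbove k)
  set box : Set (Fin n → ℝ) :=
    univ.pi fun k => Ioo (w (i.succAbove k) : ℝ) (w (i.succAbove k) + 1)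
  have hbox : box ⊆ proj '' openFace (w, i) := by
    intro u hu
    refine ⟨WithLp.toLp 2 (i.insertNth (w i : ℝ) u), ⟨?_, fun j hj => ?_⟩, ?_⟩
    · exact Fin.insertNth_apply_same (α := fun _ => ℝ) i _ u
    · obtain ⟨k, rfl⟩ := Fin.exists_succAbove_eq hj
      simpa using hu k (mem_univ k)
    · funext k
      exact Fin.insertNth_apply_succAbove (α := fun _ => ℝ) i _ u k
  have hvol : μH[(n : ℝ)] box = 1 := by
    have h := hausdorffMeasure_pi_real (ι := Fin n)
    rw [Fintype.card_fin] at h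
    simp [h, box, volume_pi_pi, Real.volume_Ioo]
  calc 1 = μH[(n : ℝ)] box := hvol.symm
    _ ≤ μH[(n : ℝ)] (proj '' openFace (w, i)) := measure_mono hbox
    _ ≤ 1 ^ (n : ℝ) * μH[(n : ℝ)] (openFace (w, i)) :=
        hproj.hausdorffMeasure_image_le n.cast_nonneg _
    _ = μH[(n : ℝ)] (openFace (w, i)) := by simp

lemma card_le_hausdorffMeasure_biUnion_face (S : Finset ((Fin d → ℤ) × Fin d)) :
    (#S : ℝ≥0∞) ≤ μH[(d : ℝ) - 1] (⋃ p ∈ S, face p) :=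
  calc (#S : ℝ≥0∞) = ∑ _p ∈ S, 1 := by simp
    _ ≤ ∑ p ∈ S, μH[(d : ℝ) - 1] (openFace p) :=
        Finset.sum_le_sum fun p _ => one_le_hausdorffMeasure_openFace p
    _ = μH[(d : ℝ) - 1] (⋃ p ∈ S, openFace p) :=
        (measure_biUnion_finset (pairwise_disjoint_openFace.set_pairwise _)
          fun p _ => measurableSet_openFace p).symm
    _ ≤ μH[(d : ℝ) - 1] (⋃ p ∈ S, face p) :=
        measure_mono (biUnion_mono subset_rfl fun p _ => openFace_subset_face p)

def faceBox (t : ℝ) (p : (Fin d → ℤ) × Fin d) : Set (EuclideanSpace ℝ (Fin d)) :=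
  {x | ∀ j, x j ∈ Icc ((p.1 j : ℝ) - t) (p.1 j + t + if j = p.2 then 0 else 1)}

lemma closedBall_subset_faceBox {t : ℝ} {p : (Fin d → ℤ) × Fin d}
    {y : EuclideanSpace ℝ (Fin d)} (hy : y ∈ face p) : closedBall y t ⊆ faceBox t p := by
  intro x hx j
  have hxy := abs_le.mp ((PiLp.dist_apply_le x y j).trans (mem_closedBall.mp hx))
  obtain ⟨hlo, hhi⟩ := hy.1 j
  refine ⟨by linarith [hxy.1], ?_⟩
  split_ifs with hj
  · subst hj; linarith [hxy.2, hy.2]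
  · linarith [hxy.2]

lemma volume_faceBox (t : ℝ) (p : (Fin d → ℤ) × Fin d) :
    volume (faceBox t p) = ENNReal.ofReal (2 * t) * ENNReal.ofReal (1 + 2 * t) ^ (d - 1) := by
  have hpi : faceBox t p = WithLp.ofLp ⁻¹'
      univ.pi fun j => Icc ((p.1 j : ℝ) - t) (p.1 j + t + if j = p.2 then 0 else 1) := by
    ext; simp only [mem_preimage, mem_univ_pi]; rfl
  rw [hpi, (PiLp.volume_preserving_ofLp _).measure_preimage
    (MeasurableSet.univ_pi fun _ => measurableSet_Icc).nullMeasurableSet, volume_pi_pi,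
    Fintype.prod_eq_mul_prod_compl p.2]
  have hcompl : ∀ j ∈ ({p.2}ᶜ : Finset (Fin d)), volume (Icc ((p.1 j : ℝ) - t)
      (p.1 j + t + if j = p.2 then 0 else 1)) = ENNReal.ofReal (1 + 2 * t) := fun j hj => by
    rw [if_neg (Finset.notMem_singleton.mp (Finset.mem_compl.mp hj)), Real.volume_Icc]
    ring_nf
  rw [Finset.prod_congr rfl hcompl, Finset.prod_const, Finset.card_compl, Finset.card_singleton,
    Fintype.card_fin, if_pos rfl, Real.volume_Icc]
  ring_nf

lemma volume_cthickening_biUnion_face_le {t : ℝ} (ht : 0 ≤ t)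
    (S : Finset ((Fin d → ℤ) × Fin d)) :
    volume (cthickening t (⋃ p ∈ S, face p)) ≤
      #S * (ENNReal.ofReal (2 * t) * ENNReal.ofReal (1 + 2 * t) ^ (d - 1)) := by
  have hcover : cthickening t (⋃ p ∈ S, face p) ⊆ ⋃ p ∈ S, faceBox t p := by
    rw [(isClosed_biUnion_finset fun p _ => isClosed_face p).cthickening_eq_biUnion_closedBall ht]
    refine iUnion₂_subset fun y hy => ?_
    obtain ⟨p, hp, hyp⟩ := mem_iUnion₂.mp hy
    exact (closedBall_subset_faceBox hyp).trans (subset_biUnion_of_mem hp)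
  calc volume (cthickening t (⋃ p ∈ S, face p))
      ≤ volume (⋃ p ∈ S, faceBox t p) := measure_mono hcover
    _ ≤ ∑ p ∈ S, volume (faceBox t p) := measure_biUnion_finset_le S _
    _ = _ := by simp [volume_faceBox]

end LatticeCubes

open LatticeCubes

theorem volume_thickened_boundary_lattice_cubes_general (d : ℕ)
    (Z : Finset (Fin d → ℤ)) (F : Set (EuclideanSpace ℝ (Fin d)))
    (hF : F = ⋃ z ∈ Z, {x : EuclideanSpace ℝ (Fin d) |
      ∀ i, x i ∈ Set.Icc ((z i : ℝ)) ((z i : ℝ) + 1)})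
    (b₁ : ℝ) (t : ℝ) (ht : t ∈ Set.Ioc 0 b₁) :
    volume (cthickening t (frontier F)) ≤
      ENNReal.ofReal (2 * (1 + 2 * b₁) ^ (d - 1) * t) * μH[((d : ℝ) - 1)] (frontier F) := by
  obtain ⟨ht₀, htb⟩ := ht
  have hfrontier : frontier F = ⋃ p ∈ boundaryFaces Z, face p := hF ▸ frontier_biUnion_cube Z
  have hfaceBox : ENNReal.ofReal (2 * t) * ENNReal.ofReal (1 + 2 * t) ^ (d - 1) ≤
      ENNReal.ofReal (2 * (1 + 2 * b₁) ^ (d - 1) * t) := by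
    rw [← ENNReal.ofReal_pow (by positivity), ← ENNReal.ofReal_mul (by positivity), mul_right_comm]
    gcongr
  rw [hfrontier, mul_comm]
  calc volume (cthickening t (⋃ p ∈ boundaryFaces Z, face p))
      ≤ #(boundaryFaces Z) * (ENNReal.ofReal (2 * t) * ENNReal.ofReal (1 + 2 * t) ^ (d - 1)) :=
        volume_cthickening_biUnion_face_le ht₀.le _
    _ ≤ _ := mul_le_mul' (card_le_hausdorffMeasure_biUnion_face _) hfaceBox

/-- For `F` a finite union of closed unit lattice cubes in `ℝ^d` and `t ∈ (0, b₁]`,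
`ℒ^d(U(∂F, t)) ≤ 2·(1 + 2b₁)^{d−1}·t·ℋ^{d−1}(∂F)`. -/
theorem volume_thickened_boundary_lattice_cubes (d : ℕ) (hd : 1 ≤ d)
    (Z : Finset (Fin d → ℤ)) (F : Set (EuclideanSpace ℝ (Fin d)))
    (hF : F = ⋃ z ∈ Z, {x : EuclideanSpace ℝ (Fin d) |
      ∀ i, x i ∈ Set.Icc ((z i : ℝ)) ((z i : ℝ) + 1)})
    (b₁ : ℝ) (hb₁ : 0 < b₁) (t : ℝ) (ht : t ∈ Set.Ioc 0 b₁) :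
    volume (cthickening t (frontier F)) ≤
      ENNReal.ofReal (2 * (1 + 2 * b₁) ^ (d - 1) * t) * μH[((d : ℝ) - 1)] (frontier F) :=
  volume_thickened_boundary_lattice_cubes_general d Z F hF b₁ t ht
end
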